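/- arXiv:2306.07884 — 6 statements merged into one kernel-verified Lean document; each statement's English description precedes it below -/
import Mathlib

section
/- Let s_prev, s, s_up, p, q, a be real numbers with s_prev ≤ s ≤ s_up and p ≤ q. Define m = min(max(a, p), q). Then |m − s| ≤ max(|a − s|, |p − s_prev|, |q − s_up|). -/
theorem monotonized_counter_one_step (s_prev s s_up p q a : ℝ)
    (h1 : s_prev ≤ s) (h2 : s ≤ s_up) (h3 : p ≤ q) :
    |min (max a p) q - s| ≤ max |a - s| (max |p - s_prev| |q - s_up|) := by
  have ha1 : a - s ≤ |a - s| := le_abs_self _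
  have ha2 : s - a ≤ |a - s| := by rw [abs_sub_comm]; exact le_abs_self _
  have hp1 : p - s_prev ≤ |p - s_prev| := le_abs_self _
  have hp2 : s_prev - p ≤ |p - s_prev| := by rw [abs_sub_comm]; exact le_abs_self _
  have hq1 : q - s_up ≤ |q - s_up| := le_abs_self _
  have hq2 : s_up - q ≤ |q - s_up| := by rw [abs_sub_comm]; exact le_abs_self _
  have h5 : |a - s| ≤ max |a - s| (max |p - s_prev| |q - s_up|) := le_max_left _ _
  have h6 : |p - s_prev| ≤ max |a - s| (max |p - s_prev| |q - s_up|) :=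
    le_trans (le_max_left _ _) (le_max_right _ _)
  have h7 : |q - s_up| ≤ max |a - s| (max |p - s_prev| |q - s_up|) :=
    le_trans (le_max_right _ _) (le_max_right _ _)
  rcases le_total a p with hap | hap
  · rw [max_eq_right hap, min_eq_left h3, abs_le]
    constructor <;> linarith
  · rw [max_eq_left hap]
    rcases le_total a q with haq | haq
    · rw [min_eq_left haq]; exact h5
    · rw [min_eq_right haq, abs_le]
      constructor <;> linarith
end

section
/- Let s_prev, s, p, a be real numbers with s_prev ≤ s. Define m = max(a, p). Then |m − s| ≤ max(|a − s|, |p − s_prev|). -/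
theorem monotonized_counter_one_step_base (s_prev s p a : ℝ)
    (h1 : s_prev ≤ s) :
    |max a p - s| ≤ max |a - s| |p - s_prev| := by
  rcases le_total a p with h | h
  · rw [max_eq_right h]
    rcases le_total p s with hp | hp
    · calc |p - s| = s - p := by rw [abs_of_nonpos (by linarith)]; ring
        _ ≤ s - a := by linarith
        _ ≤ |a - s| := by rw [abs_sub_comm]; exact le_abs_self _
        _ ≤ _ := le_max_left _ _
    · calc |p - s| = p - s := abs_of_nonneg (by linarith)
        _ ≤ p - s_prev := by linarith
        _ ≤ |p - s_prev| := le_abs_self _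
        _ ≤ _ := le_max_right _ _
  · rw [max_eq_left h]; exact le_max_left _ _
end

section
/- Let S : ℕ → ℕ → ℝ and A : ℕ → ℕ → ℝ be functions and α ≥ 0 a real number. Assume: (i) S b (t−1) ≤ S b t for all b ≥ 0 and t ≥ 1; (ii) S b t ≤ S (b−1) (t−1) for all b ≥ 1 and t ≥ 1; (iii) |A b t − S b t| ≤ α for all b ≥ 0 and t ≥ 1. Define Ŝ : ℕ → ℕ → ℝ recursively by Ŝ b 0 = S b 0 for all b, Ŝ 0 t = max(A 0 t, Ŝ 0 (t−1)) for t ≥ 1, and Ŝ b t = min(max(A b t, Ŝ b (t−1)), Ŝ (b−1) (t−1)) for b ≥ 1, t ≥ 1. Then |Ŝ b t − S b t| ≤ α for all b ≥ 0 and t ≥ 0. -/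
theorem monotonization_preserves_accuracy
    (S A Shat : ℕ → ℕ → ℝ) (α : ℝ) (hα : 0 ≤ α)
    (hmono_t : ∀ b : ℕ, ∀ t : ℕ, 1 ≤ t → S b (t - 1) ≤ S b t)
    (hmono_b : ∀ b : ℕ, 1 ≤ b → ∀ t : ℕ, 1 ≤ t → S b t ≤ S (b - 1) (t - 1))
    (hacc : ∀ b : ℕ, ∀ t : ℕ, 1 ≤ t → |A b t - S b t| ≤ α)
    (hinit : ∀ b : ℕ, Shat b 0 = S b 0)
    (hrec0 : ∀ t : ℕ, 1 ≤ t → Shat 0 t = max (A 0 t) (Shat 0 (t - 1)))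
    (hrec : ∀ b : ℕ, 1 ≤ b → ∀ t : ℕ, 1 ≤ t →
      Shat b t = min (max (A b t) (Shat b (t - 1))) (Shat (b - 1) (t - 1))) :
    ∀ b t : ℕ, |Shat b t - S b t| ≤ α := by
  intro b t
  induction t generalizing b with
  | zero => simp [hinit, hα]
  | succ t ih =>
    have ht : 1 ≤ t + 1 := Nat.le_add_left 1 t
    have hA := hacc b (t + 1) ht
    rw [abs_sub_le_iff] at hA ⊢
    have hIH := ih b
    rw [abs_sub_le_iff] at hIH
    cases b with
    | zero =>
      rw [hrec0 (t + 1) ht]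
      simp only [Nat.add_sub_cancel] at *
      have hmt := hmono_t 0 (t + 1) ht
      simp only [Nat.add_sub_cancel] at hmt
      constructor
      · rw [sub_le_iff_le_add]
        exact max_le (by linarith [hA.1]) (by linarith [hIH.1])
      · have h1 := le_max_left (A 0 (t + 1)) (Shat 0 t)
        linarith [hA.2]
    | succ b =>
      rw [hrec (b + 1) (Nat.le_add_left 1 b) (t + 1) ht]
      simp only [Nat.add_sub_cancel]
      have hIHb := ih b
      rw [abs_sub_le_iff] at hIHb
      have hmt := hmono_t (b + 1) (t + 1) ht
      have hmb := hmono_b (b + 1) (Nat.le_add_left 1 b) (t + 1) ht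
      simp only [Nat.add_sub_cancel] at hmt hmb
      constructor
      · have h1 : min (max (A (b + 1) (t + 1)) (Shat (b + 1) t)) (Shat b t)
            ≤ max (A (b + 1) (t + 1)) (Shat (b + 1) t) := min_le_left _ _
        have h2 : max (A (b + 1) (t + 1)) (Shat (b + 1) t) ≤ S (b + 1) (t + 1) + α :=
          max_le (by linarith [hA.1]) (by linarith [hIH.1])
        linarith
      · have h1 : S (b + 1) (t + 1) - α
            ≤ min (max (A (b + 1) (t + 1)) (Shat (b + 1) t)) (Shat b t) :=
          le_min (le_trans (by linarith [hA.2]) (le_max_left _ _)) (by linarith [hIHb.2])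
        linarith
end

section
/- Let k, n be natural numbers with n ≥ 1, let λ ≥ 0 be a real number, and let S be a finite index set with |S| = 2^k. Suppose (C_s)_{s ∈ S} are real numbers with 0 ≤ C_s ≤ n for all s and Σ_{s ∈ S} C_s = n, and (p_s)_{s ∈ S} are real numbers satisfying |p_s − (C_s + λ)| ≤ λ for all s. Set n* = Σ_{s ∈ S} p_s. Then n ≤ n* ≤ n + 2^{k+1}λ, and for every s ∈ S: |p_s / n* − C_s / n| ≤ 2λ/n + (2^{k+1} λ / n)(C_s / n). -/
open Finset

theorem relative_error_bound {ι : Type*} (k n : ℕ) (hn : 1 ≤ n)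
    (lam : ℝ) (hlam : 0 ≤ lam)
    (S : Finset ι) (hcard : S.card = 2 ^ k)
    (C p : ι → ℝ)
    (hC : ∀ s ∈ S, 0 ≤ C s ∧ C s ≤ n) (hCsum : ∑ s ∈ S, C s = n)
    (hp : ∀ s ∈ S, |p s - (C s + lam)| ≤ lam) :
    ((n : ℝ) ≤ ∑ s ∈ S, p s ∧ ∑ s ∈ S, p s ≤ n + 2 ^ (k + 1) * lam) ∧
    ∀ s ∈ S, |p s / (∑ s' ∈ S, p s') - C s / n| ≤
      2 * lam / n + (2 ^ (k + 1) * lam / n) * (C s / n) := by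
  have hnR : (0:ℝ) < n := by exact_mod_cast hn
  have hlo : ∀ s ∈ S, C s ≤ p s := by
    intro s hs
    have := abs_le.mp (hp s hs)
    linarith [this.1]
  have hhi : ∀ s ∈ S, p s ≤ C s + 2 * lam := by
    intro s hs
    have := abs_le.mp (hp s hs)
    linarith [this.2]
  have h1 : (n : ℝ) ≤ ∑ s ∈ S, p s := by
    calc (n:ℝ) = ∑ s ∈ S, C s := hCsum.symm
    _ ≤ ∑ s ∈ S, p s := Finset.sum_le_sum hlo
  have h2 : ∑ s ∈ S, p s ≤ n + 2 ^ (k + 1) * lam := by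
    calc ∑ s ∈ S, p s ≤ ∑ s ∈ S, (C s + 2 * lam) := Finset.sum_le_sum hhi
    _ = n + 2 ^ (k+1) * lam := by
        rw [Finset.sum_add_distrib, hCsum, Finset.sum_const, hcard]
        ring
  refine ⟨⟨h1, h2⟩, ?_⟩
  intro s hs
  set N := ∑ s' ∈ S, p s' with hN
  have hNpos : (0:ℝ) < N := lt_of_lt_of_le hnR h1
  have hCs := hC s hs
  have key : p s / N - C s / n = (p s * n - C s * N) / (n * N) := by
    field_simp
  have habs : |p s * n - C s * N| ≤ 2 * lam * n + 2 ^ (k+1) * lam * C s := by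
    rw [abs_le]
    constructor
    · nlinarith [hlo s hs, hhi s hs, hCs.1, hCs.2]
    · nlinarith [hlo s hs, hhi s hs, hCs.1, hCs.2]
  have hrhs : 2 * lam / n + (2 ^ (k + 1) * lam / n) * (C s / n)
      = (2 * lam * n + 2 ^ (k+1) * lam * C s) / (n * n) := by
    field_simp
  rw [key, abs_div, abs_of_pos (show (0:ℝ) < (n:ℝ) * N by positivity), hrhs]
  apply div_le_div₀ (by nlinarith [hCs.1, hnR, hlam]) habs (by positivity)
  nlinarith [h1]
end

section
/- Let (Ω₁, 𝒜₁) and (Ω₂, 𝒜₂) be measurable spaces, let μ₁, ν₁ be probability measures on Ω₁ and μ₂, ν₂ be probability measures on Ω₂, and let ρ, ρ' ≥ 0. Suppose that for every α ∈ (1, ∞), the Rényi divergence of order α satisfies D_α(μ₁ ‖ ν₁) ≤ ρ α and D_α(μ₂ ‖ ν₂) ≤ ρ' α. Then for every α ∈ (1, ∞), D_α(μ₁ × μ₂ ‖ ν₁ × ν₂) ≤ (ρ + ρ') α, where μ₁ × μ₂ denotes the product measure. -/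
open MeasureTheory

/-- The Rényi divergence of order `α` between two measures, defined via the
Radon–Nikodym derivative: `D_α(μ‖ν) = (α − 1)⁻¹ log ∫ (dμ/dν)^α dν`. -/
noncomputable def renyiDiv {Ω : Type*} [MeasurableSpace Ω] (α : ℝ)
    (μ ν : Measure Ω) : ℝ :=
  (α - 1)⁻¹ * Real.log ((∫⁻ x, μ.rnDeriv ν x ^ α ∂ν).toReal)

lemma singular_prod_left {Ω₁ Ω₂ : Type*} [MeasurableSpace Ω₁] [MeasurableSpace Ω₂]
    {s : Measure Ω₁} {ν₁ : Measure Ω₁} (hs : s ⟂ₘ ν₁)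
    (m : Measure Ω₂) [SFinite s] [SFinite m] (ν₂ : Measure Ω₂) [SFinite ν₁] [SFinite ν₂] :
    s.prod m ⟂ₘ ν₁.prod ν₂ := by
  obtain ⟨A, hAm, hA1, hA2⟩ := hs
  refine ⟨A ×ˢ Set.univ, hAm.prod MeasurableSet.univ, ?_, ?_⟩
  · rw [Measure.prod_prod, hA1, zero_mul]
  · have : (A ×ˢ (Set.univ : Set Ω₂))ᶜ = Aᶜ ×ˢ Set.univ := by
      ext z; simp [Set.mem_prod]
    rw [this, Measure.prod_prod, hA2, zero_mul]

lemma singular_prod_right {Ω₁ Ω₂ : Type*} [MeasurableSpace Ω₁] [MeasurableSpace Ω₂]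
    {s : Measure Ω₂} {ν₂ : Measure Ω₂} (hs : s ⟂ₘ ν₂)
    (m : Measure Ω₁) [SFinite s] [SFinite m] (ν₁ : Measure Ω₁) [SFinite ν₁] [SFinite ν₂] :
    m.prod s ⟂ₘ ν₁.prod ν₂ := by
  obtain ⟨A, hAm, hA1, hA2⟩ := hs
  refine ⟨Set.univ ×ˢ A, MeasurableSet.univ.prod hAm, ?_, ?_⟩
  · rw [Measure.prod_prod, hA1, mul_zero]
  · have : ((Set.univ : Set Ω₁) ×ˢ A)ᶜ = Set.univ ×ˢ Aᶜ := by
      ext z; simp [Set.mem_prod]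
    rw [this, Measure.prod_prod, hA2, mul_zero]

lemma withDensity_prod_withDensity {Ω₁ Ω₂ : Type*} [MeasurableSpace Ω₁] [MeasurableSpace Ω₂]
    (ν₁ : Measure Ω₁) (ν₂ : Measure Ω₂) [SFinite ν₁] [SFinite ν₂]
    {f : Ω₁ → ENNReal} {g : Ω₂ → ENNReal} (hf : Measurable f) (hg : Measurable g)
    [SigmaFinite (ν₁.withDensity f)] [SigmaFinite (ν₂.withDensity g)] :
    (ν₁.withDensity f).prod (ν₂.withDensity g)
      = (ν₁.prod ν₂).withDensity (fun z => f z.1 * g z.2) := by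
  refine (Measure.prod_eq (μ := ν₁.withDensity f) (ν := ν₂.withDensity g) fun s t hs ht => ?_)
  rw [withDensity_apply _ (hs.prod ht), ← Measure.prod_restrict,
    MeasureTheory.lintegral_prod_mul (hf.aemeasurable) (hg.aemeasurable),
    withDensity_apply _ hs, withDensity_apply _ ht]

lemma rnDeriv_prod_ae {Ω₁ Ω₂ : Type*} [MeasurableSpace Ω₁] [MeasurableSpace Ω₂]
    (μ₁ ν₁ : Measure Ω₁) (μ₂ ν₂ : Measure Ω₂)
    [IsProbabilityMeasure μ₁] [IsProbabilityMeasure ν₁]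
    [IsProbabilityMeasure μ₂] [IsProbabilityMeasure ν₂] :
    (μ₁.prod μ₂).rnDeriv (ν₁.prod ν₂)
      =ᵐ[ν₁.prod ν₂] fun z => μ₁.rnDeriv ν₁ z.1 * μ₂.rnDeriv ν₂ z.2 := by
  set f := μ₁.rnDeriv ν₁
  set g := μ₂.rnDeriv ν₂
  set s₁ := μ₁.singularPart ν₁
  set s₂ := μ₂.singularPart ν₂
  have hw₁ : IsFiniteMeasure (ν₁.withDensity f) :=
    isFiniteMeasure_of_le μ₁ (Measure.withDensity_rnDeriv_le _ _)
  have hw₂ : IsFiniteMeasure (ν₂.withDensity g) :=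
    isFiniteMeasure_of_le μ₂ (Measure.withDensity_rnDeriv_le _ _)
  have hs₁ : IsFiniteMeasure s₁ := isFiniteMeasure_of_le μ₁ (Measure.singularPart_le _ _)
  have hs₂ : IsFiniteMeasure s₂ := isFiniteMeasure_of_le μ₂ (Measure.singularPart_le _ _)
  have hdec₁ : μ₁ = s₁ + ν₁.withDensity f := (μ₁.haveLebesgueDecomposition_add ν₁)
  have hdec₂ : μ₂ = s₂ + ν₂.withDensity g := (μ₂.haveLebesgueDecomposition_add ν₂)
  have hprod : μ₁.prod μ₂
      = (s₁.prod s₂ + s₁.prod (ν₂.withDensity g) + (ν₁.withDensity f).prod s₂)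
        + (ν₁.prod ν₂).withDensity (fun z => f z.1 * g z.2) := by
    rw [← withDensity_prod_withDensity ν₁ ν₂ (Measure.measurable_rnDeriv _ _)
      (Measure.measurable_rnDeriv _ _)]
    conv_lhs => rw [hdec₁, hdec₂]
    rw [Measure.prod_add, Measure.add_prod, Measure.add_prod]
    abel
  have hsing : (s₁.prod s₂ + s₁.prod (ν₂.withDensity g) + (ν₁.withDensity f).prod s₂)
      ⟂ₘ ν₁.prod ν₂ := by
    refine Measure.MutuallySingular.add_left (Measure.MutuallySingular.add_left ?_ ?_) ?_
    · exact singular_prod_left (Measure.mutuallySingular_singularPart μ₁ ν₁) _ _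
    · exact singular_prod_left (Measure.mutuallySingular_singularPart μ₁ ν₁) _ _
    · exact singular_prod_right (Measure.mutuallySingular_singularPart μ₂ ν₂) _ _
  exact (Measure.eq_rnDeriv
    ((Measure.measurable_rnDeriv μ₁ ν₁).comp measurable_fst |>.mul
      ((Measure.measurable_rnDeriv μ₂ ν₂).comp measurable_snd)) hsing hprod).symm

theorem zCDP_composition
    {Ω₁ Ω₂ : Type*} [MeasurableSpace Ω₁] [MeasurableSpace Ω₂]
    (μ₁ ν₁ : Measure Ω₁) (μ₂ ν₂ : Measure Ω₂)
    [IsProbabilityMeasure μ₁] [IsProbabilityMeasure ν₁]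
    [IsProbabilityMeasure μ₂] [IsProbabilityMeasure ν₂]
    (ρ ρ' : ℝ) (hρ : 0 ≤ ρ) (hρ' : 0 ≤ ρ')
    (h₁ : ∀ α : ℝ, 1 < α → renyiDiv α μ₁ ν₁ ≤ ρ * α)
    (h₂ : ∀ α : ℝ, 1 < α → renyiDiv α μ₂ ν₂ ≤ ρ' * α) :
    ∀ α : ℝ, 1 < α → renyiDiv α (μ₁.prod μ₂) (ν₁.prod ν₂) ≤ (ρ + ρ') * α := by
  intro α hα
  have hα1 : (0:ℝ) < α - 1 := by linarith
  have hαpos : (0:ℝ) ≤ α := by linarith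
  -- factorize the integral
  have hI : (∫⁻ z, (μ₁.prod μ₂).rnDeriv (ν₁.prod ν₂) z ^ α ∂(ν₁.prod ν₂))
      = (∫⁻ x, μ₁.rnDeriv ν₁ x ^ α ∂ν₁) * (∫⁻ y, μ₂.rnDeriv ν₂ y ^ α ∂ν₂) := by
    rw [lintegral_congr_ae (((rnDeriv_prod_ae μ₁ ν₁ μ₂ ν₂)).mono fun z hz => by
      rw [hz])]
    have : (fun z : Ω₁ × Ω₂ => (μ₁.rnDeriv ν₁ z.1 * μ₂.rnDeriv ν₂ z.2) ^ α)
        = fun z : Ω₁ × Ω₂ => (μ₁.rnDeriv ν₁ z.1) ^ α * (μ₂.rnDeriv ν₂ z.2) ^ α := by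
      funext z; rw [ENNReal.mul_rpow_of_nonneg _ _ hαpos]
    rw [this]
    exact MeasureTheory.lintegral_prod_mul
      ((Measure.measurable_rnDeriv μ₁ ν₁).pow_const α).aemeasurable
      ((Measure.measurable_rnDeriv μ₂ ν₂).pow_const α).aemeasurable
  set I₁ := ∫⁻ x, μ₁.rnDeriv ν₁ x ^ α ∂ν₁ with hI₁
  set I₂ := ∫⁻ y, μ₂.rnDeriv ν₂ y ^ α ∂ν₂ with hI₂
  have b₁ : Real.log I₁.toReal ≤ (α - 1) * (ρ * α) := by
    have := h₁ α hα
    rw [renyiDiv, inv_mul_le_iff₀ hα1] at this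
    exact this
  have b₂ : Real.log I₂.toReal ≤ (α - 1) * (ρ' * α) := by
    have := h₂ α hα
    rw [renyiDiv, inv_mul_le_iff₀ hα1] at this
    exact this
  have hRHS : (0:ℝ) ≤ (α - 1) * ((ρ + ρ') * α) := by positivity
  rw [renyiDiv, inv_mul_le_iff₀ hα1, hI, ENNReal.toReal_mul]
  rcases eq_or_ne I₁.toReal 0 with h0 | h0
  · rw [h0, zero_mul, Real.log_zero]; exact hRHS
  rcases eq_or_ne I₂.toReal 0 with h0' | h0'
  · rw [h0', mul_zero, Real.log_zero]; exact hRHS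
  rw [Real.log_mul h0 h0']
  nlinarith [b₁, b₂]
end

section
/- Let A : ℕ → ℕ → ℝ be any function and let Ŝ : ℕ → ℕ → ℝ be defined recursively by: Ŝ b 0 given with Ŝ b 0 ≤ Ŝ (b−1) 0 for all b ≥ 1; Ŝ 0 t = max(A 0 t, Ŝ 0 (t−1)) for t ≥ 1; and Ŝ b t = min(max(A b t, Ŝ b (t−1)), Ŝ (b−1) (t−1)) for b ≥ 1, t ≥ 1. Then for all b ≥ 1 and t ≥ 1: Ŝ b (t−1) ≤ Ŝ b t, and Ŝ b t ≤ Ŝ (b−1) t. -/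
theorem monotonized_counter_monotonicity
    (A Shat : ℕ → ℕ → ℝ)
    (hinit : ∀ b : ℕ, 1 ≤ b → Shat b 0 ≤ Shat (b - 1) 0)
    (hrec0 : ∀ t : ℕ, 1 ≤ t → Shat 0 t = max (A 0 t) (Shat 0 (t - 1)))
    (hrec : ∀ b : ℕ, 1 ≤ b → ∀ t : ℕ, 1 ≤ t →
      Shat b t = min (max (A b t) (Shat b (t - 1))) (Shat (b - 1) (t - 1))) :
    ∀ b : ℕ, 1 ≤ b → ∀ t : ℕ, 1 ≤ t →
      Shat b (t - 1) ≤ Shat b t ∧ Shat b t ≤ Shat (b - 1) t := by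
  -- time monotonicity given level claim at previous time
  have mono : ∀ s : ℕ, (∀ b : ℕ, 1 ≤ b → Shat b s ≤ Shat (b - 1) s) →
      ∀ b : ℕ, Shat b s ≤ Shat b (s + 1) := by
    intro s hlev b
    rcases Nat.eq_zero_or_pos b with rfl | hb
    · rw [hrec0 (s + 1) (by omega)]
      simp
    · rw [hrec b hb (s + 1) (by omega)]
      simp only [Nat.add_sub_cancel]
      exact le_min (le_max_right _ _) (hlev b hb)
  have level : ∀ t : ℕ, ∀ b : ℕ, 1 ≤ b → Shat b t ≤ Shat (b - 1) t := by
    intro t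
    induction t with
    | zero => exact hinit
    | succ s ih =>
      intro b hb
      rw [hrec b hb (s + 1) (by omega)]
      simp only [Nat.add_sub_cancel]
      exact le_trans (min_le_right _ _) (mono s ih (b - 1))
  intro b hb t ht
  obtain ⟨s, rfl⟩ : ∃ s, t = s + 1 := ⟨t - 1, by omega⟩
  simp only [Nat.add_sub_cancel]
  exact ⟨mono s (level s) b, level (s + 1) b hb⟩
end
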